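/- arXiv:2106.00975 — 2 statements merged into one kernel-verified Lean document; each statement's English description precedes it below -/
import Mathlib

section
/- Let $\mathcal{X}=(x_n)$ be a basis of a Banach space $\mathbb{X}$ such that $\mathbb{X}^*$ is a GT space with GT constant $C_g$, and suppose $\mathcal{X}$ is $p$-Hilbertian for some $1\le p<2$ with constant $C_p$ and its multiplier operators satisfy $\|M_\varepsilon\|\le C_t|A|^t$ for all finite $A$ and unimodular $\varepsilon\in\mathcal{E}_A$, where $0<t<1/2$. Let $s=2p/(3p-2)$. Then for every $h^*\in\mathbb{X}^*$ and every finite $A\subseteq\mathbb{N}$ with $|A|=m$, $(\sum_{n\in A}|h^*(x_n)|^s)^{1/s}\le C_pC_tC_g\,m^t\|h^*\|$. -/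
open Finset Set
open scoped ENNReal NNReal

noncomputable section

instance : Fact ((1 : ℝ≥0∞) ≤ 2) := ⟨one_le_two⟩

/-- A (Schauder-type) basis of a Banach space: a norm-bounded biorthogonal system
`(e, c)` whose linear span is dense. -/
structure BBasis (X : Type*) [NormedAddCommGroup X] [NormedSpace ℝ X] where
  e : ℕ → X
  c : ℕ → X →L[ℝ] ℝ
  biorth : ∀ m n, c m (e n) = if m = n then (1 : ℝ) else 0
  e_bdd : ∃ M, ∀ n, ‖e n‖ ≤ M
  c_bdd : ∃ M, ∀ n, ‖c n‖ ≤ M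
  dense_span : Dense (Submodule.span ℝ (Set.range e) : Set X)

namespace BBasis

variable {X : Type*} [NormedAddCommGroup X] [NormedSpace ℝ X] (B : BBasis X)

/-- Coordinate projection on a finite set `A`. -/
def S (A : Finset ℕ) (f : X) : X := ∑ n ∈ A, B.c n f • B.e n

/-- The set `𝒬` of vectors with coefficients in the unit ball of `ℓ∞`. -/
def inQ (f : X) : Prop := ∀ n, |B.c n f| ≤ 1

/-- `A` is the set `A(a,f) = {n : |c n f| ≥ a}`. -/
def thrSet (a : ℝ) (f : X) (A : Finset ℕ) : Prop := ∀ n, n ∈ A ↔ a ≤ |B.c n f|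

/-- `A` is a greedy set of `f`. -/
def greedySet (f : X) (A : Finset ℕ) : Prop :=
  ∀ n ∈ A, ∀ k, k ∉ A → |B.c k f| ≤ |B.c n f|

/-- The restricted truncation operator associated with a finite set `A`. -/
def R (A : Finset ℕ) (f : X) : X :=
  if h : A.Nonempty then
    (A.inf' h fun n => |B.c n f|) • ∑ n ∈ A, Real.sign (B.c n f) • B.e n
  else 0

/-- The basis is truncation quasi-greedy. -/
def TruncationQG : Prop :=
  ∃ C : ℝ, ∀ f (A : Finset ℕ), B.greedySet f A → ‖B.R A f‖ ≤ C * ‖f‖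

/-- The basis is equivalent to the unit vector basis of `c₀`. -/
def EquivC0 : Prop :=
  ∃ c C : ℝ, 0 < c ∧ ∀ (A : Finset ℕ) (hA : A.Nonempty) (a : ℕ → ℝ),
    c * (A.sup' hA fun n => |a n|) ≤ ‖∑ n ∈ A, a n • B.e n‖ ∧
    ‖∑ n ∈ A, a n • B.e n‖ ≤ C * (A.sup' hA fun n => |a n|)

end BBasis

/-- A Banach space `Y` is a GT space: every bounded operator `T : Y → ℓ₂` is
absolutely summing. -/
def IsGTSpace (Y : Type*) [NormedAddCommGroup Y] [NormedSpace ℝ Y] : Prop :=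
  ∀ T : Y →L[ℝ] lp (fun _ : ℕ => ℝ) 2, ∃ C : ℝ,
    ∀ (A : Finset ℕ) (g : ℕ → Y) (M : ℝ),
      (∀ ε : ℕ → ℝ, (∀ k ∈ A, |ε k| = 1) → ‖∑ k ∈ A, ε k • g k‖ ≤ M) →
      ∑ k ∈ A, ‖T (g k)‖ ≤ C * M

/-!
Fix `h ∈ X*`, put `S = ∑_{n∈A} |h(xₙ)|^s` and let `q = 2p/(2-p)` be the exponent conjugate to `s`.
The operator `T : X* → ℓ²`, `g ↦ (aₙ g(xₙ))_{n∈A}` with `aₙ = |h(xₙ)|^(s-1)`, has `‖a‖_q^q = S`.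
Since `‖Tg‖² = g(∑ aₙ² g(xₙ) xₙ)`, the `p`-Hilbertian estimate and Hölder's inequality with
`1/p = 1/2 + 1/q` give `‖T‖ ≤ C_p S^(1/q)`. The functionals `gₖ = h(xₖ) x*ₖ` satisfy
`‖∑ εₖ gₖ‖ = ‖M_ε* h‖ ≤ C_t m^t ‖h‖`, so the GT inequality for `X*` yields
`S = ∑ ‖T gₖ‖ ≤ C_g C_p S^(1/q) C_t m^t ‖h‖`, and dividing by `S^(1/q)` leaves `S^(1/s)`.
-/
local notation "ℓ²" => lp (fun _ : ℕ => ℝ) 2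

theorem Real.Lr_le_Lp_mul_Lq {ι : Type*} (s : Finset ι) (f g : ι → ℝ) {p q r : ℝ}
    (hpqr : p.HolderTriple q r) :
    (∑ i ∈ s, |f i * g i| ^ r) ^ (1 / r) ≤
      (∑ i ∈ s, |f i| ^ p) ^ (1 / p) * (∑ i ∈ s, |g i| ^ q) ^ (1 / q) := by
  simpa using! NNReal.coe_le_coe.2 <| NNReal.Lr_le_Lp_mul_Lq s (fun i ↦ ⟨_, abs_nonneg (f i)⟩)
    (fun i ↦ ⟨_, abs_nonneg (g i)⟩) hpqr

theorem Real.rpow_one_div_le_of_le_mul_rpow {S K s q : ℝ} (hsq : s.HolderConjugate q)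
    (hS : 0 ≤ S) (hK : 0 ≤ K) (h : S ≤ K * S ^ (1 / q)) : S ^ (1 / s) ≤ K := by
  rcases hS.eq_or_lt with rfl | hS
  · rwa [Real.zero_rpow hsq.one_div_ne_zero]
  have hsplit : S ^ (1 / s) * S ^ (1 / q) = S := by
    rw [← Real.rpow_add hS, one_div, one_div, hsq.inv_add_inv_eq_one, Real.rpow_one]
  exact le_of_mul_le_mul_right (hsplit.trans_le h) (Real.rpow_pos_of_pos hS _)

section Exponents

variable {p : ℝ}

lemma holderConjugate_two_mul_div (hp : 2 / 3 < p) (hp2 : p < 2) :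
    (2 * p / (3 * p - 2)).HolderConjugate (2 * p / (2 - p)) := by
  have h3p : 0 < 3 * p - 2 := by linarith
  have h2p : 0 < 2 - p := by linarith
  refine Real.holderConjugate_iff.2 ⟨?_, ?_⟩
  · rw [lt_div_iff₀ h3p]; linarith
  · field_simp; ring

lemma holderTriple_two_two_mul_div (hp : 0 < p) (hp2 : p < 2) :
    Real.HolderTriple 2 (2 * p / (2 - p)) p where
  inv_add_inv_eq_inv := by field_simp; ring
  left_pos := two_pos
  right_pos := div_pos (by linarith) (by linarith)

end Exponents

/-- `π₁(T) ≤ C ‖T‖` for every `T : Y → ℓ²`, where `π₁` is computed on finite families through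
their weak `ℓ¹` norm `sup_ε ‖∑ₖ εₖ gₖ‖`. -/
def HasGTConstant (Y : Type*) [NormedAddCommGroup Y] [NormedSpace ℝ Y] (C : ℝ) : Prop :=
  ∀ T : Y →L[ℝ] ℓ², ∀ (A : Finset ℕ) (g : ℕ → Y) (M : ℝ),
    (∀ ε : ℕ → ℝ, (∀ k ∈ A, |ε k| = 1) → ‖∑ k ∈ A, ε k • g k‖ ≤ M) →
    ∑ k ∈ A, ‖T (g k)‖ ≤ C * ‖T‖ * M

theorem HasGTConstant.pos {Y : Type*} [NormedAddCommGroup Y] [NormedSpace ℝ Y] {C : ℝ}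
    (hC : HasGTConstant Y C) {y : Y} (hy : y ≠ 0) : 0 < C := by
  obtain ⟨φ, -, hφy⟩ := exists_dual_vector ℝ y (norm_ne_zero_iff.2 hy)
  set T : Y →L[ℝ] ℓ² := φ.smulRight (lp.single 2 0 1)
  have hsigns : ∀ ε : ℕ → ℝ, (∀ k ∈ ({0} : Finset ℕ), |ε k| = 1) →
      ‖∑ k ∈ ({0} : Finset ℕ), ε k • y‖ ≤ ‖y‖ := by
    intro ε hε
    simp [norm_smul, hε 0 (Finset.mem_singleton_self 0)]
  have hTy : ‖T y‖ = ‖y‖ := by simp [T, hφy, norm_smul]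
  have key := hC T {0} (fun _ => y) ‖y‖ hsigns
  rw [Finset.sum_singleton, hTy] at key
  have hCT : 1 ≤ C * ‖T‖ := le_of_mul_le_mul_right (by simpa using key) (norm_pos_iff.2 hy)
  nlinarith [norm_nonneg T]

section WeightedEvaluation

variable {X : Type*} [NormedAddCommGroup X] [NormedSpace ℝ X]

def IsPHilbertian (x : ℕ → X) (p C : ℝ) : Prop :=
  ∀ (A : Finset ℕ) (a : ℕ → ℝ), ‖∑ n ∈ A, a n • x n‖ ≤ C * (∑ n ∈ A, |a n| ^ p) ^ (1 / p)

theorem IsPHilbertian.const_nonneg {x : ℕ → X} {p C : ℝ} (hx : IsPHilbertian x p C) : 0 ≤ C :=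
  (norm_nonneg _).trans (by simpa using hx {0} fun _ => 1)

def weightedEvalL2 (A : Finset ℕ) (a : ℕ → ℝ) (x : ℕ → X) : (X →L[ℝ] ℝ) →L[ℝ] ℓ² :=
  ∑ n ∈ A, (ContinuousLinearMap.apply ℝ ℝ (x n)).smulRight (lp.single 2 n (a n))

variable (A : Finset ℕ) (a : ℕ → ℝ) (x : ℕ → X) (g : X →L[ℝ] ℝ)

theorem weightedEvalL2_apply :
    weightedEvalL2 A a x g = ∑ n ∈ A, lp.single 2 n (a n * g (x n)) := by
  simp only [weightedEvalL2, _root_.sum_apply, ContinuousLinearMap.smulRight_apply,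
    ContinuousLinearMap.apply_apply, ← lp.single_smul, smul_eq_mul, mul_comm]

theorem norm_weightedEvalL2_apply_rpow_two :
    ‖weightedEvalL2 A a x g‖ ^ (2 : ℝ) = ∑ n ∈ A, |a n * g (x n)| ^ (2 : ℝ) := by
  rw [weightedEvalL2_apply]
  simpa using lp.norm_sum_single (p := 2) (by norm_num) (fun n => a n * g (x n)) A

theorem norm_weightedEvalL2_apply_sq :
    ‖weightedEvalL2 A a x g‖ ^ 2 = g (∑ n ∈ A, (a n * (a n * g (x n))) • x n) := by
  rw [← Real.rpow_two, norm_weightedEvalL2_apply_rpow_two, map_sum]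
  refine Finset.sum_congr rfl fun n _ => ?_
  rw [Real.rpow_two, sq_abs, map_smul, smul_eq_mul]
  ring

theorem norm_weightedEvalL2_le {p q C : ℝ} (hpq : Real.HolderTriple 2 q p)
    (hx : IsPHilbertian x p C) :
    ‖weightedEvalL2 A a x‖ ≤ C * (∑ n ∈ A, |a n| ^ q) ^ (1 / q) := by
  set N := (∑ n ∈ A, |a n| ^ q) ^ (1 / q)
  have hC := hx.const_nonneg
  have hN : 0 ≤ N := by positivity
  refine ContinuousLinearMap.opNorm_le_bound _ (by positivity) fun g => ?_
  set σ := ‖weightedEvalL2 A a x g‖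
  have hσ : σ = (∑ n ∈ A, |a n * g (x n)| ^ (2 : ℝ)) ^ (1 / 2 : ℝ) := by
    rw [← norm_weightedEvalL2_apply_rpow_two, one_div,
      Real.rpow_rpow_inv (norm_nonneg _) two_ne_zero]
  have holder : (∑ n ∈ A, |a n * (a n * g (x n))| ^ p) ^ (1 / p) ≤ σ * N := by
    simp_rw [mul_comm (a _) (a _ * _)]
    rw [hσ]
    exact Real.Lr_le_Lp_mul_Lq A _ _ hpq
  have hσsq : σ ^ 2 ≤ (C * N * ‖g‖) * σ := calc
    σ ^ 2 = g (∑ n ∈ A, (a n * (a n * g (x n))) • x n) := norm_weightedEvalL2_apply_sq A a x g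
    _ ≤ ‖g‖ * ‖∑ n ∈ A, (a n * (a n * g (x n))) • x n‖ :=
        (Real.le_norm_self _).trans (g.le_opNorm _)
    _ ≤ ‖g‖ * (C * (∑ n ∈ A, |a n * (a n * g (x n))| ^ p) ^ (1 / p)) := by gcongr; exact hx A _
    _ ≤ ‖g‖ * (C * (σ * N)) := by gcongr
    _ = (C * N * ‖g‖) * σ := by ring
  have hK : 0 ≤ C * N * ‖g‖ := by positivity
  nlinarith [norm_nonneg (weightedEvalL2 A a x g)]

end WeightedEvaluation

namespace BBasis

variable {X : Type*} [NormedAddCommGroup X] [NormedSpace ℝ X] (B : BBasis X)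

theorem c_apply_e_self (n : ℕ) : B.c n (B.e n) = 1 := by simpa using B.biorth n n

theorem c_apply_e_of_ne {m n : ℕ} (h : m ≠ n) : B.c m (B.e n) = 0 := by
  simpa [h] using B.biorth m n

theorem c_ne_zero (n : ℕ) : B.c n ≠ 0 := fun h => by simpa [h] using B.c_apply_e_self n

def HasMultiplierBound (t C : ℝ) : Prop :=
  ∀ (A : Finset ℕ) (ε : ℕ → ℝ) (f : X), (∀ n ∈ A, |ε n| = 1) →
    ‖∑ n ∈ A, (ε n * B.c n f) • B.e n‖ ≤ C * (A.card : ℝ) ^ t * ‖f‖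

variable {B} {t C : ℝ}

theorem HasMultiplierBound.one_le_const (hM : B.HasMultiplierBound t C) : 1 ≤ C := by
  have h := hM {0} (fun _ => 1) (B.e 0) (by simp)
  have he : 0 < ‖B.e 0‖ := norm_pos_iff.2 fun h0 => by simpa [h0] using B.c_apply_e_self 0
  simp only [Finset.sum_singleton, one_mul, B.c_apply_e_self, one_smul, Finset.card_singleton,
    Nat.cast_one, Real.one_rpow, mul_one] at h
  exact le_of_mul_le_mul_right (by simpa using h) he

/-- The functional `∑_{k∈A} εₖ h(xₖ) x*ₖ` is `M_ε* h`. -/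
theorem HasMultiplierBound.norm_sum_smul_coord_le (hM : B.HasMultiplierBound t C)
    (h : X →L[ℝ] ℝ) (A : Finset ℕ) (ε : ℕ → ℝ) (hε : ∀ k ∈ A, |ε k| = 1) :
    ‖∑ k ∈ A, ε k • h (B.e k) • B.c k‖ ≤ C * (A.card : ℝ) ^ t * ‖h‖ := by
  have hC := hM.one_le_const
  refine ContinuousLinearMap.opNorm_le_bound _ (by positivity) fun f => ?_
  have heval : (∑ k ∈ A, ε k • h (B.e k) • B.c k) f = h (∑ k ∈ A, (ε k * B.c k f) • B.e k) := by
    simp only [_root_.sum_apply, _root_.smul_apply, map_sum, map_smul, smul_eq_mul]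
    exact Finset.sum_congr rfl fun k _ => by ring
  calc ‖(∑ k ∈ A, ε k • h (B.e k) • B.c k) f‖
      ≤ ‖h‖ * ‖∑ k ∈ A, (ε k * B.c k f) • B.e k‖ := heval ▸ h.le_opNorm _
    _ ≤ ‖h‖ * (C * (A.card : ℝ) ^ t * ‖f‖) := by gcongr; exact hM A ε f hε
    _ = C * (A.card : ℝ) ^ t * ‖h‖ * ‖f‖ := by ring

variable (B)

theorem weightedEvalL2_apply_smul_c (a : ℕ → ℝ) (h : X →L[ℝ] ℝ) {A : Finset ℕ} {k : ℕ}
    (hk : k ∈ A) :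
    weightedEvalL2 A a B.e (h (B.e k) • B.c k) = lp.single 2 k (a k * h (B.e k)) := by
  rw [weightedEvalL2_apply, Finset.sum_eq_single_of_mem k hk]
  · simp [B.c_apply_e_self]
  · intro n _ hnk
    simp [B.c_apply_e_of_ne (Ne.symm hnk)]

theorem rpow_one_div_sum_abs_rpow_le {p q s Cp Ct Cg : ℝ} (hsq : s.HolderConjugate q)
    (hpq : Real.HolderTriple 2 q p) (hGT : HasGTConstant (X →L[ℝ] ℝ) Cg)
    (hCp : IsPHilbertian B.e p Cp) (hM : B.HasMultiplierBound t Ct) (h : X →L[ℝ] ℝ)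
    (A : Finset ℕ) :
    (∑ n ∈ A, |h (B.e n)| ^ s) ^ (1 / s) ≤ Cp * Ct * Cg * (A.card : ℝ) ^ t * ‖h‖ := by
  set S := ∑ n ∈ A, |h (B.e n)| ^ s
  set a : ℕ → ℝ := fun n => |h (B.e n)| ^ (s - 1)
  set T := weightedEvalL2 A a B.e
  set M := Ct * (A.card : ℝ) ^ t * ‖h‖
  have hCp0 := hCp.const_nonneg
  have hCg0 := (hGT.pos (B.c_ne_zero 0)).le
  have hM0 : 0 ≤ M := by have := hM.one_le_const; positivity
  have ha : ∀ n, 0 ≤ a n := fun n => by positivity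
  have ha_rpow : ∀ n, |a n| ^ q = |h (B.e n)| ^ s := fun n => by
    rw [abs_of_nonneg (ha n), ← Real.rpow_mul (abs_nonneg _), hsq.sub_one_mul_conj]
  have ha_mul : ∀ n, |a n * h (B.e n)| = |h (B.e n)| ^ s := fun n => by
    rw [abs_mul, abs_of_nonneg (ha n), ← Real.rpow_add_one' (abs_nonneg _) (by simp [hsq.ne_zero]),
      sub_add_cancel]
  have hT : ‖T‖ ≤ Cp * S ^ (1 / q) := by
    simpa only [ha_rpow] using norm_weightedEvalL2_le A a B.e hpq hCp
  have hGT_T : ∑ k ∈ A, ‖T (h (B.e k) • B.c k)‖ ≤ Cg * ‖T‖ * M :=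
    hGT T A _ M (hM.norm_sum_smul_coord_le h A)
  have hT_coord : ∑ k ∈ A, ‖T (h (B.e k) • B.c k)‖ = S := Finset.sum_congr rfl fun k hk => by
    rw [B.weightedEvalL2_apply_smul_c a h hk, lp.norm_single (by norm_num), Real.norm_eq_abs,
      ha_mul]
  refine (Real.rpow_one_div_le_of_le_mul_rpow hsq (by positivity) (by positivity : 0 ≤ Cg * Cp * M)
    ?_).trans_eq (by ring)
  calc S ≤ Cg * ‖T‖ * M := hT_coord ▸ hGT_T
    _ ≤ Cg * (Cp * S ^ (1 / q)) * M := by gcongr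
    _ = Cg * Cp * M * S ^ (1 / q) := by ring

end BBasis

theorem stmt15_general {X : Type*} [NormedAddCommGroup X] [NormedSpace ℝ X]
    (B : BBasis X) (p t Cp Ct Cg : ℝ)
    (hp1 : 1 ≤ p) (hp2 : p < 2)
    (hGT : ∀ T : (X →L[ℝ] ℝ) →L[ℝ] lp (fun _ : ℕ => ℝ) 2,
      ∀ (A : Finset ℕ) (g : ℕ → (X →L[ℝ] ℝ)) (M : ℝ),
        (∀ ε : ℕ → ℝ, (∀ k ∈ A, |ε k| = 1) → ‖∑ k ∈ A, ε k • g k‖ ≤ M) →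
        ∑ k ∈ A, ‖T (g k)‖ ≤ Cg * ‖T‖ * M)
    (hCp : ∀ (A : Finset ℕ) (a : ℕ → ℝ),
      ‖∑ n ∈ A, a n • B.e n‖ ≤ Cp * (∑ n ∈ A, |a n| ^ p) ^ (1 / p))
    (hM : ∀ (A : Finset ℕ) (ε : ℕ → ℝ) (f : X), (∀ n ∈ A, |ε n| = 1) →
      ‖∑ n ∈ A, (ε n * B.c n f) • B.e n‖ ≤ Ct * (A.card : ℝ) ^ t * ‖f‖) :
    ∀ (hs : X →L[ℝ] ℝ) (A : Finset ℕ),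
      (∑ n ∈ A, |hs (B.e n)| ^ (2 * p / (3 * p - 2))) ^ (1 / (2 * p / (3 * p - 2))) ≤
        Cp * Ct * Cg * (A.card : ℝ) ^ t * ‖hs‖ :=
  B.rpow_one_div_sum_abs_rpow_le (holderConjugate_two_mul_div (by linarith) hp2)
    (holderTriple_two_two_mul_div (by linarith) hp2) hGT hCp hM

/-- let `B` be a basis of a Banach space `X` whose dual is a GT space
with GT constant `Cg`, which is `p`-Hilbertian (`1 ≤ p < 2`) with constant `Cp`, and
whose multipliers satisfy `‖M_ε‖ ≤ Ct |A|^t`, `0 < t < 1/2`.  With `s = 2p/(3p-2)`,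
for every `h* ∈ X*` and finite `A` with `|A| = m`,
`(∑_{n∈A} |h*(e n)|^s)^{1/s} ≤ Cp Ct Cg m^t ‖h*‖`. -/
theorem stmt15 {X : Type*} [NormedAddCommGroup X] [NormedSpace ℝ X] [CompleteSpace X]
    (B : BBasis X) (p t Cp Ct Cg : ℝ)
    (hp1 : 1 ≤ p) (hp2 : p < 2) (ht0 : 0 < t) (ht : t < 1 / 2)
    (hGT : ∀ T : (X →L[ℝ] ℝ) →L[ℝ] lp (fun _ : ℕ => ℝ) 2,
      ∀ (A : Finset ℕ) (g : ℕ → (X →L[ℝ] ℝ)) (M : ℝ),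
        (∀ ε : ℕ → ℝ, (∀ k ∈ A, |ε k| = 1) → ‖∑ k ∈ A, ε k • g k‖ ≤ M) →
        ∑ k ∈ A, ‖T (g k)‖ ≤ Cg * ‖T‖ * M)
    (hCp : ∀ (A : Finset ℕ) (a : ℕ → ℝ),
      ‖∑ n ∈ A, a n • B.e n‖ ≤ Cp * (∑ n ∈ A, |a n| ^ p) ^ (1 / p))
    (hM : ∀ (A : Finset ℕ) (ε : ℕ → ℝ) (f : X), (∀ n ∈ A, |ε n| = 1) →
      ‖∑ n ∈ A, (ε n * B.c n f) • B.e n‖ ≤ Ct * (A.card : ℝ) ^ t * ‖f‖) :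
    ∀ (hs : X →L[ℝ] ℝ) (A : Finset ℕ),
      (∑ n ∈ A, |hs (B.e n)| ^ (2 * p / (3 * p - 2))) ^ (1 / (2 * p / (3 * p - 2))) ≤
        Cp * Ct * Cg * (A.card : ℝ) ^ t * ‖hs‖ :=
  stmt15_general B p t Cp Ct Cg hp1 hp2 hGT hCp hM
end
end

section
/- Bidemocratic bases are truncation quasi-greedy: if $\mathcal{X}$ is a bidemocratic basis of a Banach space, then $\sup_m\|\mathcal{R}_m\|<\infty$. -/
open Finset Set
open scoped ENNReal NNReal

noncomputable section

/-!
Let `a = min_{n ∈ A} |c n f|` and split `A` into the indices `P` where `c n f > 0` and `N` where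
`c n f < 0`, so that `R A f = a • (∑_P e n - ∑_N e n)`. Testing `f` against `∑_P c n` gives
`a #P ≤ ‖∑_P c n‖ ‖f‖`, and multiplying by `‖∑_P e n‖` and using bidemocracy on `P` gives
`a ‖∑_P e n‖ ≤ C ‖f‖`; likewise for `N` with `-f`.
-/

theorem Real.sign_smul_eq_ite_sub_ite {E : Type*} [AddCommGroup E] [Module ℝ E] (r : ℝ) (v : E) :
    Real.sign r • v = (if 0 < r then v else 0) - (if r < 0 then v else 0) := by
  rcases lt_trichotomy r 0 with h | rfl | h
  · simp [Real.sign_of_neg h, h, h.not_gt]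
  · simp
  · simp [Real.sign_of_pos h, h, h.not_gt]

theorem Finset.sum_sign_smul_eq_sub {ι E : Type*} [AddCommGroup E] [Module ℝ E]
    (A : Finset ι) (g : ι → ℝ) (v : ι → E) :
    ∑ n ∈ A, Real.sign (g n) • v n =
      ∑ n ∈ A with 0 < g n, v n - ∑ n ∈ A with g n < 0, v n := by
  simp only [Real.sign_smul_eq_ite_sub_ite, sum_sub_distrib, sum_filter]

theorem ContinuousLinearMap.mul_card_le_norm_sum_mul_norm {ι X : Type*} [NormedAddCommGroup X]
    [NormedSpace ℝ X] (φ : ι → X →L[ℝ] ℝ) (S : Finset ι) (f : X) {a : ℝ}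
    (hS : ∀ n ∈ S, a ≤ φ n f) : a * #S ≤ ‖∑ n ∈ S, φ n‖ * ‖f‖ :=
  calc a * #S = ∑ _n ∈ S, a := by rw [sum_const, nsmul_eq_mul, mul_comm]
    _ ≤ ∑ n ∈ S, φ n f := sum_le_sum hS
    _ = (∑ n ∈ S, φ n) f := (_root_.sum_apply ..).symm
    _ ≤ ‖∑ n ∈ S, φ n‖ * ‖f‖ := (le_abs_self _).trans ((∑ n ∈ S, φ n).le_opNorm f)

namespace BBasis

variable {X : Type*} [NormedAddCommGroup X] [NormedSpace ℝ X] (B : BBasis X) {C : ℝ}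

def Bidemocratic (C : ℝ) : Prop :=
  ∀ (m : ℕ) (A A' : Finset ℕ), #A ≤ m → #A' ≤ m →
    ‖∑ k ∈ A, B.e k‖ * ‖∑ k ∈ A', B.c k‖ ≤ C * m

variable {B}

theorem Bidemocratic.nonneg (hC : B.Bidemocratic C) : 0 ≤ C := by
  simpa using hC 1 ∅ ∅

theorem Bidemocratic.mul_norm_sum_le (hC : B.Bidemocratic C) (f : X) {a : ℝ}
    {S : Finset ℕ} (hS : ∀ n ∈ S, a ≤ B.c n f) : a * ‖∑ n ∈ S, B.e n‖ ≤ C * ‖f‖ := by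
  rcases S.eq_empty_or_nonempty with rfl | hne
  · simpa using mul_nonneg hC.nonneg (norm_nonneg f)
  have hcard : (0 : ℝ) < #S := by exact_mod_cast hne.card_pos
  have htest := ContinuousLinearMap.mul_card_le_norm_sum_mul_norm B.c S f hS
  refine le_of_mul_le_mul_right ?_ hcard
  calc a * ‖∑ n ∈ S, B.e n‖ * #S = ‖∑ n ∈ S, B.e n‖ * (a * #S) := by ring
    _ ≤ ‖∑ n ∈ S, B.e n‖ * (‖∑ n ∈ S, B.c n‖ * ‖f‖) := by gcongr
    _ = ‖∑ n ∈ S, B.e n‖ * ‖∑ n ∈ S, B.c n‖ * ‖f‖ := by ring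
    _ ≤ C * #S * ‖f‖ := mul_le_mul_of_nonneg_right (hC _ S S le_rfl le_rfl) (norm_nonneg f)
    _ = C * ‖f‖ * #S := by ring

theorem Bidemocratic.norm_R_le (hC : B.Bidemocratic C) (A : Finset ℕ) (f : X) :
    ‖B.R A f‖ ≤ 2 * C * ‖f‖ := by
  unfold R
  split_ifs with hA
  swap
  · simpa using mul_nonneg (mul_nonneg zero_le_two hC.nonneg) (norm_nonneg f)
  set a := A.inf' hA fun n => |B.c n f|
  have ha : 0 ≤ a := le_inf' hA _ fun n _ => abs_nonneg _
  have hle : ∀ n ∈ A, a ≤ |B.c n f| := fun n hn => inf'_le _ hn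
  have hpos : ∀ n ∈ A.filter (0 < B.c · f), a ≤ B.c n f := fun n hn => by
    rw [mem_filter] at hn
    simpa [abs_of_pos hn.2] using hle n hn.1
  have hneg : ∀ n ∈ A.filter (B.c · f < 0), a ≤ B.c n (-f) := fun n hn => by
    rw [mem_filter] at hn
    simpa [abs_of_neg hn.2] using hle n hn.1
  have kP := hC.mul_norm_sum_le f hpos
  have kN := hC.mul_norm_sum_le (-f) hneg
  rw [norm_neg] at kN
  rw [sum_sign_smul_eq_sub, norm_smul, Real.norm_of_nonneg ha]
  calc a * ‖∑ n ∈ A with 0 < B.c n f, B.e n - ∑ n ∈ A with B.c n f < 0, B.e n‖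
      ≤ a * ‖∑ n ∈ A with 0 < B.c n f, B.e n‖ + a * ‖∑ n ∈ A with B.c n f < 0, B.e n‖ := by
        rw [← mul_add]; exact mul_le_mul_of_nonneg_left (norm_sub_le _ _) ha
    _ ≤ 2 * C * ‖f‖ := by linarith

end BBasis

theorem stmt16_general {X : Type*} [NormedAddCommGroup X] [NormedSpace ℝ X]
    (B : BBasis X)
    (hbid : ∃ C : ℝ, ∀ (m : ℕ) (A A' : Finset ℕ), A.card ≤ m → A'.card ≤ m →
      ‖∑ k ∈ A, B.e k‖ * ‖∑ k ∈ A', B.c k‖ ≤ C * m) :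
    B.TruncationQG := by
  obtain ⟨C, hC⟩ := hbid
  exact ⟨2 * C, fun f A _ => BBasis.Bidemocratic.norm_R_le hC A f⟩

/-- a bidemocratic basis of a Banach space is truncation quasi-greedy. -/
theorem stmt16 {X : Type*} [NormedAddCommGroup X] [NormedSpace ℝ X] [CompleteSpace X]
    (B : BBasis X)
    (hbid : ∃ C : ℝ, ∀ (m : ℕ) (A A' : Finset ℕ), A.card ≤ m → A'.card ≤ m →
      ‖∑ k ∈ A, B.e k‖ * ‖∑ k ∈ A', B.c k‖ ≤ C * m) :
    B.TruncationQG :=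
  stmt16_general B hbid
end
end
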